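/- In regular AA-CBR-P over a finite casebase, the attack relation of the mined framework restricted to D ∪ {default} is well-founded provided the casebase is coherent and each preorder's strict part is well-founded; hence the grounded extension of the framework (excluding the new case's symmetric loops) is well-defined and unique. -/
import Mathlib


/-- Strict part of a relation. -/
def strictPart {X : Type*} (R : X → X → Prop) (x y : X) : Prop :=
  R x y ∧ ¬ R y x

/-- Symmetric part of a relation. -/
def symPart {X : Type*} (R : X → X → Prop) (x y : X) : Prop :=
  R x y ∧ R y x

/-- Potential attack on order `i` (outcomes modelled as `Bool`). -/
def PotAttacks {X : Type*} {n : ℕ} (R : Fin n → X → X → Prop) (i : Fin n)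
    (a b : X × Bool) : Prop :=
  a.2 ≠ b.2 ∧ strictPart (R i) a.1 b.1 ∧ ∀ j, j < i → symPart (R j) a.1 b.1

/-- Casebase attack on order `i` relative to the set `D` of available cases
(standing for `D ∪ {default}`): `α →ᵢ β` iff `α ⇒ᵢ β` and no more concise
attacker `γ = (x_γ, y_α) ∈ D` with `x_α ≽ⱼ x_γ` for all `j` exists, where
(a) `γ ⇒ᵢ β` and `∃ l ≥ i, x_α ≻ₗ x_γ`, or
(b) `¬(γ ⇒ᵢ β)` and `∃ l > i, γ ⇒ₗ β`. -/
def CBAttacks {X : Type*} {n : ℕ} (R : Fin n → X → X → Prop)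
    (D : Set (X × Bool)) (i : Fin n) (a b : X × Bool) : Prop :=
  PotAttacks R i a b ∧
  ¬ ∃ g ∈ D, g.2 = a.2 ∧ (∀ j, R j a.1 g.1) ∧
      ((PotAttacks R i g b ∧ ∃ l, i ≤ l ∧ strictPart (R l) a.1 g.1) ∨
       (¬ PotAttacks R i g b ∧ ∃ l, i < l ∧ PotAttacks R l g b))

/-- Incoherent attack. -/
def IncAttacks {X : Type*} {n : ℕ} (R : Fin n → X → X → Prop)
    (a b : X × Bool) : Prop :=
  (∀ i, symPart (R i) a.1 b.1) ∧ a.2 ≠ b.2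

/-- A casebase is coherent iff no two of its cases are equivalent on all
preorders while having different outcomes. -/
def Coherent {X : Type*} {n : ℕ} (R : Fin n → X → X → Prop)
    (D : Set (X × Bool)) : Prop :=
  ¬ ∃ a ∈ D, ∃ b ∈ D, (∀ i, symPart (R i) a.1 b.1) ∧ a.2 ≠ b.2

/-- The attack relation of the mined framework restricted to `D ∪ {default}`:
the union of the casebase attacks and the incoherent attacks. -/
def FrameworkAttacks {X : Type*} {n : ℕ} (R : Fin n → X → X → Prop)
    (Args : Set (X × Bool)) (a b : X × Bool) : Prop :=
  (∃ i, CBAttacks R Args i a b) ∨ IncAttacks R a b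

/-- Lexicographic strict decrease across the preorders. -/
def LexDec {X : Type*} {n : ℕ} (R : Fin n → X → X → Prop) (x y : X) : Prop :=
  ∃ i, strictPart (R i) x y ∧ ∀ j, j < i → symPart (R j) x y

lemma lexDec_irrefl {X : Type*} {n : ℕ} {R : Fin n → X → X → Prop}
    (hrefl : ∀ i x, R i x x) (x : X) : ¬ LexDec R x x := by
  rintro ⟨i, hs, -⟩; exact hs.2 (hrefl i x)

lemma lexDec_trans {X : Type*} {n : ℕ} {R : Fin n → X → X → Prop}
    (htrans : ∀ i x y z, R i x y → R i y z → R i x z)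
    {x y z : X} (h1 : LexDec R x y) (h2 : LexDec R y z) : LexDec R x z := by
  obtain ⟨i, hsi, hmi⟩ := h1
  obtain ⟨k, hsk, hmk⟩ := h2
  rcases lt_trichotomy i k with hik | hik | hik
  · refine ⟨i, ?_, fun j hj => ?_⟩
    · have hsym := hmk i hik
      exact ⟨htrans i _ _ _ hsi.1 hsym.1,
        fun h => hsi.2 (htrans i _ _ _ hsym.1 h)⟩
    · have h1 := hmi j hj
      have h2 := hmk j (hj.trans hik)
      exact ⟨htrans j _ _ _ h1.1 h2.1, htrans j _ _ _ h2.2 h1.2⟩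
  · subst hik
    refine ⟨i, ⟨htrans i _ _ _ hsi.1 hsk.1,
      fun h => hsk.2 (htrans i _ _ _ h hsi.1)⟩, fun j hj => ?_⟩
    have h1 := hmi j hj
    have h2 := hmk j hj
    exact ⟨htrans j _ _ _ h1.1 h2.1, htrans j _ _ _ h2.2 h1.2⟩
  · refine ⟨k, ?_, fun j hj => ?_⟩
    · have hsym := hmi k hik
      exact ⟨htrans k _ _ _ hsym.1 hsk.1,
        fun h => hsk.2 (htrans k _ _ _ h hsym.1)⟩
    · have h1 := hmi j (hj.trans hik)
      have h2 := hmk j hj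
      exact ⟨htrans j _ _ _ h1.1 h2.1, htrans j _ _ _ h2.2 h1.2⟩

/-- If the attack relation is well-founded, the grounded extension exists and
is unique. -/
lemma exists_unique_grounded {α : Type*} {att : α → α → Prop}
    (hwf : WellFounded att) :
    ∃! G : Set α, G = {a | ∀ b, att b a → ∃ c ∈ G, att c b} := by
  have hT : WellFounded (Relation.TransGen att) := hwf.transGen
  let F : ∀ a, (∀ c, Relation.TransGen att c a → Prop) → Prop :=
    fun a ih => ∀ b, att b a →
      ∃ c, ∃ h : Relation.TransGen att c a, ih c h ∧ att c b
  let g : α → Prop := hT.fix F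
  have g_iff : ∀ a, g a ↔ ∀ b, att b a → ∃ c, g c ∧ att c b := by
    intro a
    have := hT.fix_eq F a
    rw [show g a = F a (fun c _ => g c) from this]
    constructor
    · intro h b hb
      obtain ⟨c, _, hgc, hc⟩ := h b hb
      exact ⟨c, hgc, hc⟩
    · intro h b hb
      obtain ⟨c, hgc, hc⟩ := h b hb
      exact ⟨c, Relation.TransGen.tail (Relation.TransGen.single hc) hb, hgc, hc⟩
  refine ⟨{a | g a}, ?_, ?_⟩
  · ext a
    simp only [Set.mem_setOf_eq]
    exact g_iff a
  · intro G' hG'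
    ext a
    induction a using hT.induction with
    | _ a ih =>
      have hmem : a ∈ G' ↔ ∀ b, att b a → ∃ c ∈ G', att c b := by
        conv_lhs => rw [hG']
        rfl
      simp only [Set.mem_setOf_eq]
      rw [hmem, g_iff a]
      constructor
      · intro h b hb
        obtain ⟨c, hcG, hc⟩ := h b hb
        have : Relation.TransGen att c a :=
          Relation.TransGen.tail (Relation.TransGen.single hc) hb
        exact ⟨c, (ih c this).mp hcG, hc⟩
      · intro h b hb
        obtain ⟨c, hgc, hc⟩ := h b hb
        have : Relation.TransGen att c a :=
          Relation.TransGen.tail (Relation.TransGen.single hc) hb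
        exact ⟨c, (ih c this).mpr hgc, hc⟩

/-- In regular AA-CBR-P over a finite coherent casebase, with each strict part
well-founded, the attack relation restricted to `D ∪ {(x_δ, δ)}` is
well-founded, and hence the grounded extension (the unique fixed point of the
defence function) is well-defined and unique. -/
theorem regular_aacbrP_wellfounded_grounded {X : Type*} {n : ℕ}
    (R : Fin n → X → X → Prop)
    (hrefl : ∀ i x, R i x x)
    (htrans : ∀ i x y z, R i x y → R i y z → R i x z)
    (D : Set (X × Bool)) (hfin : D.Finite)
    (xδ : X) (δ : Bool)
    (hregular : ∀ x i, R i x xδ)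
    (hcoh : Coherent R (D ∪ {(xδ, δ)}))
    (hwf : ∀ i, WellFounded (strictPart (R i))) :
    WellFounded (fun a b : ↥(D ∪ {(xδ, δ)}) =>
        FrameworkAttacks R (D ∪ {(xδ, δ)}) a.1 b.1) ∧
    ∃! G : Set ↥(D ∪ {(xδ, δ)}),
      G = {a : ↥(D ∪ {(xδ, δ)}) |
            ∀ b : ↥(D ∪ {(xδ, δ)}), FrameworkAttacks R (D ∪ {(xδ, δ)}) b.1 a.1 →
              ∃ c ∈ G, FrameworkAttacks R (D ∪ {(xδ, δ)}) c.1 b.1} := by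
  set Args := D ∪ {(xδ, δ)} with hArgs
  have hAfin : Args.Finite := hfin.union (Set.finite_singleton _)
  haveI : Finite ↥Args := hAfin.to_subtype
  -- any framework attack between arguments lexicographically decreases
  have hsub : ∀ a b : ↥Args, FrameworkAttacks R Args a.1 b.1 →
      LexDec R a.1.1 b.1.1 := by
    rintro a b (⟨i, ⟨⟨-, hs, hm⟩, -⟩⟩ | ⟨hsym, hne⟩)
    · exact ⟨i, hs, hm⟩
    · exact absurd ⟨a.1, a.2, b.1, b.2, hsym, hne⟩ hcoh
  have hLwf : WellFounded (fun a b : ↥Args => LexDec R a.1.1 b.1.1) := by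
    letI : IsTrans ↥Args (fun a b : ↥Args => LexDec R a.1.1 b.1.1) :=
      ⟨fun _ _ _ h1 h2 => lexDec_trans htrans h1 h2⟩
    letI : IsIrrefl ↥Args (fun a b : ↥Args => LexDec R a.1.1 b.1.1) :=
      ⟨fun a => lexDec_irrefl hrefl a.1.1⟩
    exact Finite.wellFounded_of_trans_of_irrefl _
  have hattwf : WellFounded (fun a b : ↥Args => FrameworkAttacks R Args a.1 b.1) :=
    Subrelation.wf (fun {a b} h => hsub a b h) hLwf
  exact ⟨hattwf, exists_unique_grounded hattwf⟩
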